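/- Let κ ≥ ℵ₀ be a cardinal. Suppose (X, μ) is a measure space satisfying property (Aκ), and suppose (Y, d) is a metric space, with Hausdorff measure H^h for some Hausdorff function h, such that every dense subset of Y has cardinality strictly larger than κ. If f : X → Y is a measurable surjection, then there exists a set N ⊆ X with μ(N) = 0 and H^h(f(N)) > 0. Moreover, if in addition X carries a topology with a countable basis in which points are closed, and f has the property that for every closed set F ⊆ Y the preimage f⁻¹(F) is a countable union of closed sets, then N can be chosen to be perfect. -/

import Mathlib

open MeasureTheory Set Filter Topology
open scoped NNReal ENNReal

universe u v

/-- A Hausdorff (gauge) function `h : [0,∞) → [0,∞]`: nondecreasing, right-continuous,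
and positive on positive arguments. -/
structure IsHausdorffFunction (h : ℝ≥0 → ℝ≥0∞) : Prop where
  mono : Monotone h
  right_continuous : ∀ t : ℝ≥0, ContinuousWithinAt h (Set.Ici t) t
  pos : ∀ t : ℝ≥0, 0 < t → 0 < h t

/-- `h` is of finite order: `limsup_{t→0+} h(3t)/h(t) < ∞`. -/
def FiniteOrder (h : ℝ≥0 → ℝ≥0∞) : Prop :=
  Filter.limsup (fun t : ℝ≥0 => h (3 * t) / h t) (nhdsWithin 0 (Set.Ioi 0)) < ⊤

/-- The Hausdorff (outer) measure built from the gauge `h`: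
`H^h(E) = sup_{δ>0} inf { Σ h(diam Uᵢ) : E ⊆ ⋃ Uᵢ, diam Uᵢ ≤ δ }`. -/
noncomputable def hausdorffM {Z : Type*} [EMetricSpace Z] (h : ℝ≥0 → ℝ≥0∞) :
    MeasureTheory.OuterMeasure Z :=
  MeasureTheory.OuterMeasure.mkMetric (fun d => h d.toNNReal)

/-- A set `S` is σ-finite with respect to an outer measure `μ` if it is a countable union
of Carathéodory-measurable sets of finite measure. -/
def SigmaFiniteSet {Z : Type*} (μ : MeasureTheory.OuterMeasure Z) (S : Set Z) : Prop :=
  ∃ A : ℕ → Set Z, (∀ n, μ.IsCaratheodory (A n) ∧ μ (A n) < ⊤) ∧ S = ⋃ n, A n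

/-- A metric space has finite structural dimension if for every `ξ > 0` there are `N` and
`δ₀ > 0` such that every set of diameter `δ ≤ δ₀` can be covered by `N` sets of diameter
at most `ξ·δ`. -/
def FiniteStructuralDim (Z : Type*) [EMetricSpace Z] : Prop :=
  ∀ ξ : ℝ≥0, 0 < ξ → ∃ (N : ℕ) (δ₀ : ℝ≥0), 0 < δ₀ ∧
    ∀ s : Set Z, EMetric.diam s ≤ δ₀ →
      ∃ U : Fin N → Set Z, s ⊆ ⋃ i, U i ∧ ∀ i, EMetric.diam (U i) ≤ ξ * EMetric.diam s

/-- Property (H) for a subspace `Y` of the complete separable metric space `Z`. -/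
structure PropertyH {Z : Type*} [MetricSpace Z] (Y : Set Z) (h : ℝ≥0 → ℝ≥0∞) : Prop where
  complete : CompleteSpace Z
  separable : TopologicalSpace.SeparableSpace Z
  analytic : MeasureTheory.AnalyticSet Y
  hausdorff : IsHausdorffFunction h
  cont : Continuous h
  zero : h 0 = 0
  alt : FiniteOrder h ∨ FiniteStructuralDim Z ∨ ∀ x y z : Z, dist x z ≤ max (dist x y) (dist y z)

/-- Property (H∞): property (H) together with non-σ-finiteness of `Y` w.r.t. `H^h`. -/
def PropertyHInf {Z : Type*} [MetricSpace Z] (Y : Set Z) (h : ℝ≥0 → ℝ≥0∞) : Prop :=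
  PropertyH Y h ∧ ¬ SigmaFiniteSet (hausdorffM h) Y

/-- Property (Aκ): `X` is a union of κ-many measurable sets of finite measure, and
κ-many null sets always union to a null set. -/
def PropertyA {X : Type u} (μ : MeasureTheory.OuterMeasure X) (κ : Cardinal.{u}) : Prop :=
  (∃ (ι : Type u) (A : ι → Set X), Cardinal.mk ι = κ ∧ (⋃ i, A i) = Set.univ ∧
      ∀ i, μ.IsCaratheodory (A i) ∧ μ (A i) < ⊤) ∧
  ∀ (ι : Type u) (A : ι → Set X), Cardinal.mk ι = κ → (∀ i, μ (A i) = 0) → μ (⋃ i, A i) = 0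

/-- A set is perfect if it is closed and every open set meeting it meets it in an
infinite set. -/
def PerfectSet {X : Type*} [TopologicalSpace X] (C : Set X) : Prop :=
  IsClosed C ∧ ∀ O : Set X, IsOpen O → (O ∩ C).Nonempty → (O ∩ C).Infinite

/-- The gauge `d ↦ d^s`. -/
noncomputable def sGauge (s : ℝ≥0) : ℝ≥0 → ℝ≥0∞ := fun d => (d : ℝ≥0∞) ^ (s : ℝ)

/-- Hausdorff–Besicovitch dimension: the supremum of all `s ≥ 0` with `H^{d^s}(E) > 0`. -/
noncomputable def hDim {Z : Type*} [EMetricSpace Z] (E : Set Z) : ℝ≥0∞ :=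
  ⨆ (s : ℝ≥0) (_ : 0 < hausdorffM (sGauge s) E), (s : ℝ≥0∞)


/-!
Cover `X` by the κ pieces `A i` of finite measure given by (Aκ). Maximal `1/n`-separated sets
have dense union, so the hypothesis on dense sets yields an `ε`-separated set `S ⊆ Y` with more
than κ points. The preimages of the balls of radius `ε/2` around the points of `S` are disjoint
and measurable, so each `A i` charges only countably many of them, and some `R ⊆ S` of
cardinality `ℵ₁` avoids all charged points. Ulam's matrix shows that a finite measure vanishing
on `ℵ₁` disjoint sets, all of whose subunions are measurable, vanishes on their union; hence
each `A i`, and by (Aκ) the whole of `X`, gives the preimage `N` of the union of those balls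
measure zero. Since `f '' N ⊇ R` is uncountable and `ε`-separated, no countable cover by sets of
diameter `≤ ε` exists, so `H^h(f '' N) = ∞`.

For the perfect set, replace the balls by closed balls of radius `ε/4`: their union is closed,
its preimage is a countable union of closed sets, one of which still maps onto uncountably many
points of `R`, and so does its perfect kernel (Cantor–Bendixson).
-/
open Function Metric Cardinal

theorem exists_ulam_matrix {W : Type*} [LinearOrder W] (hW : ∀ b : W, (Iio b).Countable) :
    ∃ A : W → ℕ → Set W, (∀ n, Pairwise (Disjoint on fun a => A a n)) ∧
      ∀ a, (⋃ n, A a n)ᶜ.Countable := by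
  choose g hg using fun b => Set.countable_iff_exists_injective.1 (hW b)
  refine ⟨fun a n => {b | ∃ hab : a < b, g b ⟨a, hab⟩ = n}, fun n a a' hne => ?_, fun a => ?_⟩
  · exact Set.disjoint_left.2 fun b ⟨_, hb⟩ ⟨_, hb'⟩ =>
      hne (congrArg Subtype.val (hg b (hb.trans hb'.symm)))
  · refine ((hW a).insert a).mono fun b hb => ?_
    simp only [mem_compl_iff, mem_iUnion, mem_ofPred_eq, not_exists] at hb
    rcases lt_or_ge a b with hab | hba
    · exact absurd rfl (hb _ hab)
    · exact hba.eq_or_lt.imp id id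

theorem exists_linearOrder_countable_Iio {W : Type*} (hW : #W ≤ ℵ₁) :
    ∃ _ : LinearOrder W, ∀ b : W, (Iio b).Countable := by
  obtain ⟨e⟩ : Nonempty (W ↪ (ℵ₁ : Cardinal).ord.ToType) := by
    rwa [← Cardinal.le_def, mk_ord_toType]
  let := LinearOrder.lift' e e.injective
  refine ⟨this, fun b => ?_⟩
  have : (Iio (e b)).Countable := by
    rw [← le_aleph0_iff_set_countable, ← lt_aleph_one_iff]
    simpa using mk_Iio_lt (e b) (by simp)
  exact this.preimage e.injective

theorem MeasureTheory.measure_iUnion_null_of_mk_le_aleph_one {α ι : Type*} [MeasurableSpace α]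
    (ν : Measure α) [SFinite ν] {U : ι → Set α} (hι : #ι ≤ ℵ₁)
    (hdisj : Pairwise (Disjoint on U)) (hmeas : ∀ E : Set ι, MeasurableSet (⋃ i ∈ E, U i))
    (hnull : ∀ i, ν (U i) = 0) : ν (⋃ i, U i) = 0 := by
  by_cases hc : Countable ι
  · exact measure_iUnion_null hnull
  obtain ⟨_, hIio⟩ := exists_linearOrder_countable_Iio hι
  obtain ⟨A, hAdisj, hAcompl⟩ := exists_ulam_matrix hIio
  have hpos : {a | ∃ n, 0 < ν (⋃ i ∈ A a n, U i)}.Countable := by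
    simp only [ofPred_exists]
    refine countable_iUnion fun n => Measure.countable_meas_pos_of_disjoint_iUnion
      (fun a => hmeas _) fun a a' hne => ?_
    exact Set.disjoint_iUnion₂_left.2 fun i hi => Set.disjoint_iUnion₂_right.2 fun j hj =>
      hdisj ((hAdisj n hne).ne_of_mem hi hj)
  obtain ⟨a, ha⟩ := nonempty_compl.2 fun h => hc (countable_univ_iff.1 (h ▸ hpos))
  simp only [mem_compl_iff, mem_ofPred_eq, not_exists, not_lt, nonpos_iff_eq_zero] at ha
  have hsplit : ⋃ i, U i = (⋃ n, ⋃ i ∈ A a n, U i) ∪ ⋃ i ∈ (⋃ n, A a n)ᶜ, U i := by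
    rw [← biUnion_iUnion, ← biUnion_union, union_compl_self, biUnion_univ]
  rw [hsplit, measure_union_null_iff, measure_biUnion_null_iff (hAcompl a)]
  exact ⟨measure_iUnion_null ha, fun i _ => hnull i⟩

section Separated

variable {Y : Type*} [PseudoEMetricSpace Y] {ε : ℝ≥0∞} {S : Set Y}

theorem Metric.exists_isSeparated_forall_exists_edist_le (ε : ℝ≥0∞) :
    ∃ S : Set Y, IsSeparated ε S ∧ ∀ x, ∃ y ∈ S, edist x y ≤ ε := by
  obtain ⟨S, hS⟩ := zorn_subset {S : Set Y | IsSeparated ε S} fun c hc hchain =>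
    ⟨⋃₀ c, (pairwise_sUnion hchain.directedOn).2 hc, fun _ => subset_sUnion_of_mem⟩
  refine ⟨S, hS.prop, fun x => ?_⟩
  by_contra! hfar
  have hx : x ∈ S := hS.mem_of_prop_insert (hS.prop.insert fun y hy _ => hfar y hy)
  simpa using hfar x hx

theorem Metric.IsSeparated.ne_top (hS : IsSeparated ε S) (hS' : S.Nontrivial) : ε ≠ ∞ := by
  obtain ⟨x, hx, y, hy, hne⟩ := hS'
  exact ne_top_of_lt (hS hx hy hne)

theorem Metric.IsSeparated.pairwiseDisjoint_eball (hS : IsSeparated ε S) :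
    S.PairwiseDisjoint (eball · (ε / 2)) := by
  intro y hy y' hy' hne
  refine Set.disjoint_left.2 fun z hz hz' => (hS hy hy' hne).not_ge ?_
  calc edist y y' ≤ edist y z + edist z y' := edist_triangle _ _ _
    _ ≤ ε / 2 + ε / 2 := add_le_add (mem_eball'.1 hz).le (mem_eball.1 hz').le
    _ = ε := ENNReal.add_halves ε

theorem Metric.IsSeparated.pairwise_disjoint_preimage_eball {X : Type*} (hS : IsSeparated ε S)
    (f : X → Y) : Pairwise (Disjoint on fun y : S => f ⁻¹' eball (y : Y) (ε / 2)) :=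
  fun y y' hne => (hS.pairwiseDisjoint_eball y.2 y'.2 (Subtype.coe_ne_coe.2 hne)).preimage f

theorem Metric.IsSeparated.exists_lt_ediam_of_subset_iUnion (hS : IsSeparated ε S)
    (hSc : ¬S.Countable) {t : ℕ → Set Y} (ht : S ⊆ ⋃ n, t n) : ∃ n, ε < ediam (t n) := by
  by_contra! hsmall
  choose n hn using fun y : S => mem_iUnion.1 (ht y.2)
  refine hSc (countable_coe_iff.1 (Injective.countable (f := n) fun y y' hyy' => ?_))
  by_contra hne
  exact (hS y.2 y'.2 (Subtype.coe_ne_coe.2 hne)).not_ge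
    ((edist_le_ediam_of_mem (hn y) (hyy' ▸ hn y')).trans (hsmall _))

end Separated

theorem Metric.IsSeparated.isClosed_biUnion_closedEBall {Y : Type*} [PseudoMetricSpace Y]
    {ε : ℝ≥0∞} {S : Set Y} (hS : IsSeparated ε S) (hε : 0 < ε) :
    IsClosed (⋃ y ∈ S, closedEBall y (ε / 4)) := by
  have hquarter : ε / 4 + ε / 4 = ε / 2 := by
    rw [ENNReal.div_add_div_same, ← two_mul, show (4 : ℝ≥0∞) = 2 * 2 by norm_num,
      ENNReal.mul_div_mul_left _ _ two_ne_zero ENNReal.ofNat_ne_top]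
  have hlf : LocallyFinite fun y : S => closedEBall (y : Y) (ε / 4) := by
    intro z
    refine ⟨eball z (ε / 4), eball_mem_nhds z (ENNReal.div_pos hε.ne' (by simp)), ?_⟩
    have hnear : ∀ y : Y, (closedEBall y (ε / 4) ∩ eball z (ε / 4)).Nonempty →
        z ∈ eball y (ε / 2) := fun y ⟨w, hwy, hwz⟩ => by
      refine mem_eball.2 ((edist_triangle z w y).trans_lt ?_)
      exact hquarter ▸ ENNReal.add_lt_add_of_lt_of_le (edist_ne_top w y) (mem_eball'.1 hwz) hwy
    refine Set.Subsingleton.finite fun y hy y' hy' => Subtype.ext ?_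
    by_contra hne
    exact (hS.pairwiseDisjoint_eball y.2 y'.2 hne).ne_of_mem (hnear y hy) (hnear y' hy') rfl
  simpa only [biUnion_eq_iUnion] using hlf.isClosed_iUnion fun _ => isClosed_closedEBall

theorem MeasureTheory.OuterMeasure.mkMetric'_eq_top_of_isSeparated {Y : Type*} [EMetricSpace Y]
    {ε : ℝ≥0∞} {S : Set Y} (m : Set Y → ℝ≥0∞) {E : Set Y} (hSE : S ⊆ E)
    (hS : IsSeparated ε S) (hSc : ¬S.Countable) (hε : 0 < ε) :
    mkMetric' m E = ⊤ := by
  refine top_unique (le_trans ?_ ((le_iSup₂ (f := fun r (_ : 0 < r) => mkMetric'.pre m r)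
    ε hε) E))
  rw [mkMetric'.pre, boundedBy_apply]
  refine le_iInf₂ fun t ht => ?_
  obtain ⟨n, hn⟩ := hS.exists_lt_ediam_of_subset_iUnion hSc (hSE.trans ht)
  have hne : (t n).Nonempty := nonempty_iff_ne_empty.2 fun h => by simp [h] at hn
  refine le_trans (le_of_eq ?_) (ENNReal.le_tsum n)
  rw [iSup_pos hne]
  exact (MeasureTheory.extend_eq_top (m := fun s (_ : ediam s ≤ ε) => m s) hn.not_ge).symm

theorem Perfect.perfectSet {X : Type*} [TopologicalSpace X] [T1Space X] {D : Set X}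
    (hD : Perfect D) : PerfectSet D :=
  ⟨hD.closed, fun _ hO ⟨_, hxO, hxD⟩ =>
    Set.Infinite.of_accPt ((hD.acc _ hxD).nhds_inter (hO.mem_nhds hxO))⟩

theorem exists_perfectSet_subset_of_subset_image {X Y : Type*} [TopologicalSpace X]
    [SecondCountableTopology X] [T1Space X] {f : X → Y} {C : ℕ → Set X}
    (hC : ∀ n, IsClosed (C n)) {R : Set Y} (hR : ¬R.Countable) (hRC : R ⊆ f '' ⋃ n, C n) :
    ∃ D ⊆ ⋃ n, C n, PerfectSet D ∧ ¬(R ∩ f '' D).Countable := by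
  obtain ⟨n, hn⟩ : ∃ n, ¬(R ∩ f '' C n).Countable := by
    by_contra! h
    refine hR ((countable_iUnion h).mono fun y hy => ?_)
    rw [image_iUnion] at hRC
    obtain ⟨n, hn⟩ := mem_iUnion.1 (hRC hy)
    exact mem_iUnion.2 ⟨n, hy, hn⟩
  obtain ⟨V, D, hV, hD, hCVD⟩ := exists_countable_union_perfect_of_isClosed (hC n)
  refine ⟨D, (hCVD ▸ subset_union_right).trans (subset_iUnion C n), hD.perfectSet,
    fun hRD => hn (((hV.image f).union hRD).mono ?_)⟩
  rw [hCVD, image_union, inter_union_distrib_left]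
  exact union_subset_union_left _ inter_subset_right

theorem exists_isSeparated_lt_mk {Y : Type u} [PseudoEMetricSpace Y] {κ : Cardinal.{u}}
    (hκ : ℵ₀ ≤ κ) (hdense : ∀ D : Set Y, Dense D → κ < #D) :
    ∃ ε > 0, ∃ S : Set Y, IsSeparated ε S ∧ κ < #S := by
  choose S hS hSnet using fun n : ℕ =>
    exists_isSeparated_forall_exists_edist_le (Y := Y) (n : ℝ≥0∞)⁻¹
  have hD : Dense (⋃ n, S n) := by
    refine EMetric.dense_iff.2 fun x r hr => ?_
    obtain ⟨n, hn⟩ := ENNReal.exists_inv_nat_lt hr.ne'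
    obtain ⟨y, hy, hxy⟩ := hSnet n x
    exact ⟨y, mem_eball'.2 (hxy.trans_lt hn), mem_iUnion_of_mem n hy⟩
  by_contra! hsmall
  refine (hdense _ hD).not_ge ?_
  have hunion := mk_iUnion_le_lift S
  simp only [lift_uzero, mk_eq_aleph0, lift_aleph0] at hunion
  refine hunion.trans ((mul_le_mul' le_rfl (ciSup_le' fun n => ?_)).trans (aleph0_mul_eq hκ).le)
  exact hsmall _ (ENNReal.inv_pos.2 (ENNReal.natCast_ne_top n)) _ (hS n)

theorem mk_iUnion_le_of_countable {α ι : Type u} {κ : Cardinal.{u}} (hκ : ℵ₀ ≤ κ)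
    (hι : #ι ≤ κ) {s : ι → Set α} (hs : ∀ i, (s i).Countable) : #(⋃ i, s i) ≤ κ :=
  (mk_iUnion_le s).trans ((mul_le_mul' hι (ciSup_le' fun i =>
    le_aleph0_iff_set_countable.2 (hs i))).trans (mul_aleph0_eq hκ).le)

theorem exists_subset_diff_mk_eq_aleph_one {α : Type u} {κ : Cardinal.{u}} (hκ : ℵ₀ ≤ κ)
    {S B : Set α} (hS : κ < #S) (hB : #B ≤ κ) : ∃ R ⊆ S \ B, #R = ℵ₁ := by
  refine le_mk_iff_exists_subset.1 (succ_aleph0 ▸ Order.succ_le_of_lt (hκ.trans_lt ?_))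
  by_contra! h
  have : #S ≤ #↑(S \ B) + #B := (mk_le_mk_of_subset (by simp)).trans (mk_union_le _ _)
  exact hS.not_ge (this.trans ((add_le_add h hB).trans (add_eq_self hκ).le))

theorem exists_isSeparated_mk_eq_aleph_one_measure_preimage_eball_eq_zero {X : Type*}
    {Y ι : Type u} [MeasurableSpace X] [PseudoEMetricSpace Y] {κ : Cardinal.{u}} (hκ : ℵ₀ ≤ κ)
    (hdense : ∀ D : Set Y, Dense D → κ < #D) {f : X → Y}
    (hf : ∀ O : Set Y, IsOpen O → MeasurableSet (f ⁻¹' O)) (ν : ι → Measure X)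
    [∀ i, SFinite (ν i)] (hι : #ι ≤ κ) :
    ∃ ε > 0, ∃ R : Set Y, #R = ℵ₁ ∧ IsSeparated ε R ∧
      ∀ i, ∀ y ∈ R, ν i (f ⁻¹' eball y (ε / 2)) = 0 := by
  obtain ⟨ε, hε, S, hS, hSκ⟩ := exists_isSeparated_lt_mk hκ hdense
  set Bad : ι → Set Y := fun i => {y ∈ S | 0 < ν i (f ⁻¹' eball y (ε / 2))}
  have hBad : ∀ i, (Bad i).Countable := fun i => by
    refine Set.Countable.mono (fun y hy => ?_) ((Measure.countable_meas_pos_of_disjoint_iUnion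
      (μ := ν i) (fun _ => hf _ isOpen_eball) (hS.pairwise_disjoint_preimage_eball f)).image
        Subtype.val)
    exact ⟨⟨y, hy.1⟩, hy.2, rfl⟩
  obtain ⟨R, hRsub, hR⟩ :=
    exists_subset_diff_mk_eq_aleph_one hκ hSκ (mk_iUnion_le_of_countable hκ hι hBad)
  refine ⟨ε, hε, R, hR, hS.subset (hRsub.trans sdiff_subset), fun i y hy => ?_⟩
  by_contra hne
  exact (hRsub hy).2 (mem_iUnion_of_mem i ⟨(hRsub hy).1, pos_iff_ne_zero.2 hne⟩)

theorem exists_isSeparated_null_preimage_of_propertyA {X Y : Type u} [PseudoEMetricSpace Y]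
    {μ : OuterMeasure X} {κ : Cardinal.{u}} (hκ : ℵ₀ ≤ κ) (hA : PropertyA μ κ)
    (hdense : ∀ D : Set Y, Dense D → κ < #D) {f : X → Y}
    (hf : ∀ O : Set Y, IsOpen O → μ.IsCaratheodory (f ⁻¹' O)) :
    ∃ ε > 0, ∃ R : Set Y, ¬R.Countable ∧ IsSeparated ε R ∧
      μ (f ⁻¹' ⋃ y ∈ R, eball y (ε / 2)) = 0 := by
  obtain ⟨⟨ι, A, hι, hAcover, hAfin⟩, hAnull⟩ := hA
  let _ : MeasurableSpace X := μ.caratheodory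
  let ν : ι → Measure X := fun i => (μ.toMeasure le_rfl).restrict (A i)
  have hν : ∀ i {s}, MeasurableSet s → ν i s = μ (s ∩ A i) := fun i s hs => by
    rw [Measure.restrict_apply hs, toMeasure_apply _ _ (hs.inter (hAfin i).1)]
  have : ∀ i, IsFiniteMeasure (ν i) := fun i =>
    ⟨by simpa [hν i MeasurableSet.univ] using (hAfin i).2⟩
  obtain ⟨ε, hε, R, hR, hRsep, hRnull⟩ :=
    exists_isSeparated_mk_eq_aleph_one_measure_preimage_eball_eq_zero hκ hdense
      (f := f) (fun O hO => hf O hO) ν hι.le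
  refine ⟨ε, hε, R, ?_, hRsep, ?_⟩
  · rw [← le_aleph0_iff_set_countable, hR]
    exact aleph0_lt_aleph_one.not_ge
  have hopen : IsOpen (⋃ y ∈ R, eball y (ε / 2)) := isOpen_biUnion fun _ _ => isOpen_eball
  have hUnull : ∀ i, ν i (f ⁻¹' ⋃ y ∈ R, eball y (ε / 2)) = 0 := fun i => by
    rw [biUnion_eq_iUnion, preimage_iUnion]
    refine measure_iUnion_null_of_mk_le_aleph_one (ν i) hR.le
      (hRsep.pairwise_disjoint_preimage_eball f) (fun E => ?_) fun y => hRnull i y y.2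
    rw [← preimage_iUnion₂]
    exact hf _ (isOpen_biUnion fun _ _ => isOpen_eball)
  refine measure_mono_null (fun x hx => ?_) (hAnull ι _ hι fun i =>
    (hν i (hf _ hopen)).symm.trans (hUnull i))
  obtain ⟨i, hi⟩ := mem_iUnion.1 (hAcover.symm ▸ mem_univ x : x ∈ ⋃ i, A i)
  exact mem_iUnion.2 ⟨i, hx, hi⟩

theorem statement_11_general {X Y : Type u} [MetricSpace Y]
    (μ : MeasureTheory.OuterMeasure X)
    (κ : Cardinal.{u}) (hκ : Cardinal.aleph0 ≤ κ)
    (hA : PropertyA μ κ)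
    (h : ℝ≥0 → ℝ≥0∞)
    (hdense : ∀ D : Set Y, Dense D → κ < Cardinal.mk D)
    (f : X → Y) (hsurj : Function.Surjective f)
    (hmeas : ∀ O : Set Y, IsOpen O → μ.IsCaratheodory (f ⁻¹' O)) :
    (∃ N : Set X, μ N = 0 ∧ 0 < hausdorffM h (f '' N)) ∧
    (∀ tX : TopologicalSpace X, @SecondCountableTopology X tX →
      @T1Space X tX →
      (∀ F : Set Y, IsClosed F →
        ∃ C : ℕ → Set X, (∀ n, @IsClosed X tX (C n)) ∧ f ⁻¹' F = ⋃ n, C n) →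
      ∃ N : Set X, @PerfectSet X tX N ∧ μ N = 0 ∧ 0 < hausdorffM h (f '' N)) := by
  obtain ⟨ε, hε, R, hR, hRsep, hnull⟩ :=
    exists_isSeparated_null_preimage_of_propertyA hκ hA hdense hmeas
  have hε' : ε ≠ ∞ := hRsep.ne_top (not_subsingleton_iff.1 fun hsub => hR hsub.countable)
  set W := ⋃ y ∈ R, closedEBall y (ε / 4)
  have hWnull : μ (f ⁻¹' W) = 0 := measure_mono_null (preimage_mono (biUnion_mono subset_rfl
    fun y _ z hz => mem_eball.2 (hz.trans_lt
      (ENNReal.div_lt_div_left hε.ne' hε' (by norm_num))))) hnull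
  have hRW : R ⊆ W := fun y hy => mem_biUnion hy mem_closedEBall_self
  have hpos : ∀ N, ¬(R ∩ f '' N).Countable → 0 < hausdorffM h (f '' N) := fun N hN => by
    rw [hausdorffM, OuterMeasure.mkMetric, OuterMeasure.mkMetric'_eq_top_of_isSeparated _
      inter_subset_right (hRsep.subset inter_subset_left) hN hε]
    exact ENNReal.zero_lt_top
  refine ⟨⟨f ⁻¹' W, hWnull, hpos _ ?_⟩, fun tX _ _ hFσ => ?_⟩
  · rwa [image_preimage_eq _ hsurj, inter_eq_left.2 hRW]
  obtain ⟨C, hC, hWC⟩ := hFσ W (hRsep.isClosed_biUnion_closedEBall hε)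
  obtain ⟨D, hDW, hD, hRD⟩ := exists_perfectSet_subset_of_subset_image hC hR
    (hWC ▸ image_preimage_eq W hsurj ▸ hRW)
  exact ⟨D, hD, measure_mono_null (hDW.trans hWC.symm.subset) hWnull, hpos D hRD⟩

/-- Theorem `GeneralResultNonSeparable`. -/
theorem statement_11 {X Y : Type u} [MetricSpace Y]
    (μ : MeasureTheory.OuterMeasure X)
    (κ : Cardinal.{u}) (hκ : Cardinal.aleph0 ≤ κ)
    (hA : PropertyA μ κ)
    (h : ℝ≥0 → ℝ≥0∞) (hh : IsHausdorffFunction h)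
    (hdense : ∀ D : Set Y, Dense D → κ < Cardinal.mk D)
    (f : X → Y) (hsurj : Function.Surjective f)
    (hmeas : ∀ O : Set Y, IsOpen O → μ.IsCaratheodory (f ⁻¹' O)) :
    (∃ N : Set X, μ N = 0 ∧ 0 < hausdorffM h (f '' N)) ∧
    (∀ tX : TopologicalSpace X, @SecondCountableTopology X tX →
      @T1Space X tX →
      (∀ F : Set Y, IsClosed F →
        ∃ C : ℕ → Set X, (∀ n, @IsClosed X tX (C n)) ∧ f ⁻¹' F = ⋃ n, C n) →
      ∃ N : Set X, @PerfectSet X tX N ∧ μ N = 0 ∧ 0 < hausdorffM h (f '' N)) :=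
  statement_11_general μ κ hκ hA h hdense f hsurj hmeas
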